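/- Let λ > 0 and let (A_k, B_k), k ≥ 1, be the softImpute-ALS iterates. Then (a) every limit point (A*,B*) of the sequence (A_k,B_k) is a first-order stationary point of F, i.e., ∇_A F(A*,B*) = 0 and ∇_B F(A*,B*) = 0; and (b) if B* is a limit point of (B_k) along a subsequence ν with B_k → B* for k ∈ ν, then the subsequence (A_k)_{k∈ν} converges; symmetrically, if A* is a limit point of (A_k) along a subsequence μ, then (B_k)_{k∈μ} converges. -/

import Mathlib

noncomputable section

open Matrix Filter

/-- Squared Frobenius norm of a real matrix. -/
def frobSq {m n : ℕ} (M : Matrix (Fin m) (Fin n) ℝ) : ℝ := ∑ i, ∑ j, (M i j) ^ 2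

/-- `P_Ω`: keep the entries in `Ω`, zero out the rest. -/
def proj {m n : ℕ} (Ω : Finset (Fin m × Fin n)) (Y : Matrix (Fin m) (Fin n) ℝ) :
    Matrix (Fin m) (Fin n) ℝ := Matrix.of fun i j => if (i, j) ∈ Ω then Y i j else 0

/-- `P_Ω^⊥`: zero out the entries in `Ω`, keep the rest. -/
def projPerp {m n : ℕ} (Ω : Finset (Fin m × Fin n)) (Y : Matrix (Fin m) (Fin n) ℝ) :
    Matrix (Fin m) (Fin n) ℝ := Matrix.of fun i j => if (i, j) ∈ Ω then 0 else Y i j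

/-- `F(A,B) = (1/2)‖P_Ω(X − ABᵀ)‖_F² + (λ/2)(‖A‖_F² + ‖B‖_F²)`. -/
def Fobj {m n r : ℕ} (Ω : Finset (Fin m × Fin n)) (X : Matrix (Fin m) (Fin n) ℝ) (lam : ℝ)
    (A : Matrix (Fin m) (Fin r) ℝ) (B : Matrix (Fin n) (Fin r) ℝ) : ℝ :=
  (1 / 2) * frobSq (proj Ω (X - A * Bᵀ)) + (lam / 2) * (frobSq A + frobSq B)

/-- `Q_A(Z₁|A,B)`. -/
def QA {m n r : ℕ} (Ω : Finset (Fin m × Fin n)) (X : Matrix (Fin m) (Fin n) ℝ) (lam : ℝ)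
    (Z₁ : Matrix (Fin m) (Fin r) ℝ) (A : Matrix (Fin m) (Fin r) ℝ)
    (B : Matrix (Fin n) (Fin r) ℝ) : ℝ :=
  (1 / 2) * frobSq (proj Ω (X - Z₁ * Bᵀ) + projPerp Ω (A * Bᵀ - Z₁ * Bᵀ)) +
    (lam / 2) * frobSq Z₁ + (lam / 2) * frobSq B

/-- `Q_B(Z₂|A,B)`. -/
def QB {m n r : ℕ} (Ω : Finset (Fin m × Fin n)) (X : Matrix (Fin m) (Fin n) ℝ) (lam : ℝ)
    (Z₂ : Matrix (Fin n) (Fin r) ℝ) (A : Matrix (Fin m) (Fin r) ℝ)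
    (B : Matrix (Fin n) (Fin r) ℝ) : ℝ :=
  (1 / 2) * frobSq (proj Ω (X - A * Z₂ᵀ) + projPerp Ω (A * Bᵀ - A * Z₂ᵀ)) +
    (lam / 2) * frobSq A + (lam / 2) * frobSq Z₂

/-- `(A_k, B_k)` are softImpute-ALS iterates: `A_{k+1} ∈ argmin Q_A(·|A_k,B_k)` and
`B_{k+1} ∈ argmin Q_B(·|A_{k+1},B_k)`. -/
def SoftImputeALS {m n r : ℕ} (Ω : Finset (Fin m × Fin n)) (X : Matrix (Fin m) (Fin n) ℝ)
    (lam : ℝ) (A : ℕ → Matrix (Fin m) (Fin r) ℝ) (B : ℕ → Matrix (Fin n) (Fin r) ℝ) : Prop :=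
  ∀ k : ℕ,
    (∀ Z₁ : Matrix (Fin m) (Fin r) ℝ,
      QA Ω X lam (A (k + 1)) (A k) (B k) ≤ QA Ω X lam Z₁ (A k) (B k)) ∧
    (∀ Z₂ : Matrix (Fin n) (Fin r) ℝ,
      QB Ω X lam (B (k + 1)) (A (k + 1)) (B k) ≤ QB Ω X lam Z₂ (A (k + 1)) (B k))


/-!
`Q_A(·|A,B)` majorizes `F(·,B)`, touches it at `A`, and is a ridge-regression objective, hence
`λ`-strongly convex. So each half-step of the algorithm lowers `F` by at least `λ/2` times the
squared length of the step: the steps are square-summable, and since `F(A,B) ≥ λ/2 ‖A‖²` the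
iterates stay bounded. The normal equations of the ridge problem express `∇_A F` at the new
iterate as a term linear in the step, so the gradient vanishes at every limit point. For (b),
`F(·,B*)` is itself `λ`-strongly convex, so `∇_A F(·,B*)` has at most one zero; every cluster point
of the bounded sequence `(A_k)_{k∈ν}` is such a zero, hence the sequence converges. The `B`-steps
are the `A`-steps of the transposed problem.
-/

namespace SoftImpute

open Topology

-- `Matrix` is a type synonym, so the instance for Π-types is not found through it.
instance {a b : ℕ} : FirstCountableTopology (Matrix (Fin a) (Fin b) ℝ) :=
  inferInstanceAs (FirstCountableTopology (Fin a → Fin b → ℝ))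

theorem exists_tendsto_of_forall_subseq_mem {X : Type*} [TopologicalSpace X]
    [FirstCountableTopology X] {K s : Set X} {u : ℕ → X} (hK : IsCompact K) (hu : ∀ k, u k ∈ K)
    (hs : s.Subsingleton)
    (h : ∀ (ψ : ℕ → ℕ) x, StrictMono ψ → Tendsto (u ∘ ψ) atTop (𝓝 x) → x ∈ s) :
    ∃ x, Tendsto u atTop (𝓝 x) := by
  obtain ⟨x, -, ψ, hψ, hx⟩ := hK.tendsto_subseq hu
  refine ⟨x, hK.tendsto_nhds_of_unique_mapClusterPt (.of_forall hu) fun y _ hy => ?_⟩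
  obtain ⟨ψ', hψ', hy'⟩ := hy.tendsto_subseq
  exact hs (h ψ' y hψ' hy') (h ψ x hψ hx)

theorem tendsto_zero_of_add_mul_le {u d : ℕ → ℝ} {c : ℝ} (hc : 0 < c) (hu : ∀ k, 0 ≤ u k)
    (hd : ∀ k, 0 ≤ d k) (h : ∀ k, u (k + 1) + c * d k ≤ u k) : Tendsto d atTop (𝓝 0) := by
  have hanti : Antitone u := antitone_nat_of_succ_le (f := u) fun k => by nlinarith [hd k, h k]
  have hconv := tendsto_atTop_ciInf hanti ⟨0, by rintro _ ⟨k, rfl⟩; exact hu k⟩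
  have hgap : Tendsto (fun k => (u k - u (k + 1)) / c) atTop (𝓝 0) := by
    simpa using (hconv.sub (hconv.comp (tendsto_add_atTop_nat 1))).div_const c
  exact squeeze_zero hd (fun k => by rw [le_div_iff₀ hc]; linarith [h k]) hgap

section Frobenius

variable {a b c : ℕ}

def frobInner (M N : Matrix (Fin a) (Fin b) ℝ) : ℝ := ∑ i, ∑ j, M i j * N i j

theorem frobInner_self (M : Matrix (Fin a) (Fin b) ℝ) : frobInner M M = frobSq M := by
  simp [frobInner, frobSq, sq]

@[simp]
theorem frobInner_zero_left (M : Matrix (Fin a) (Fin b) ℝ) : frobInner 0 M = 0 := by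
  simp [frobInner]

theorem frobInner_add_left (M N P : Matrix (Fin a) (Fin b) ℝ) :
    frobInner (M + N) P = frobInner M P + frobInner N P := by
  simp [frobInner, add_mul, Finset.sum_add_distrib]

theorem frobInner_sub_left (M N P : Matrix (Fin a) (Fin b) ℝ) :
    frobInner (M - N) P = frobInner M P - frobInner N P := by
  simp [frobInner, sub_mul, Finset.sum_sub_distrib]

theorem frobInner_smul_left (t : ℝ) (M N : Matrix (Fin a) (Fin b) ℝ) :
    frobInner (t • M) N = t * frobInner M N := by
  simp [frobInner, Finset.mul_sum, mul_assoc]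

theorem frobInner_smul_right (t : ℝ) (M N : Matrix (Fin a) (Fin b) ℝ) :
    frobInner M (t • N) = t * frobInner M N := by
  simp [frobInner, Finset.mul_sum, mul_left_comm]

theorem frobInner_mul_transpose (M : Matrix (Fin a) (Fin b) ℝ) (N : Matrix (Fin a) (Fin c) ℝ)
    (B : Matrix (Fin b) (Fin c) ℝ) : frobInner M (N * Bᵀ) = frobInner (M * B) N := by
  simp only [frobInner, Matrix.mul_apply, Matrix.transpose_apply, Finset.mul_sum,
    Finset.sum_mul]
  refine Finset.sum_congr rfl fun i _ => ?_
  rw [Finset.sum_comm]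
  exact Finset.sum_congr rfl fun _ _ => Finset.sum_congr rfl fun _ _ => by ring

theorem frobSq_nonneg (M : Matrix (Fin a) (Fin b) ℝ) : 0 ≤ frobSq M := by
  unfold frobSq; positivity

theorem frobSq_eq_zero_iff {M : Matrix (Fin a) (Fin b) ℝ} : frobSq M = 0 ↔ M = 0 := by
  simp [frobSq, Finset.sum_eq_zero_iff_of_nonneg, Finset.sum_nonneg, sq_nonneg, ← Matrix.ext_iff]

@[simp]
theorem frobSq_zero : frobSq (0 : Matrix (Fin a) (Fin b) ℝ) = 0 := frobSq_eq_zero_iff.2 rfl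

theorem frobSq_add (M N : Matrix (Fin a) (Fin b) ℝ) :
    frobSq (M + N) = frobSq M + 2 * frobInner M N + frobSq N := by
  simp only [frobSq, frobInner, Matrix.add_apply, Finset.mul_sum, ← Finset.sum_add_distrib]
  exact Finset.sum_congr rfl fun _ _ => Finset.sum_congr rfl fun _ _ => by ring

theorem frobSq_sub (M N : Matrix (Fin a) (Fin b) ℝ) :
    frobSq (M - N) = frobSq M - 2 * frobInner M N + frobSq N := by
  simp only [frobSq, frobInner, Matrix.sub_apply, Finset.mul_sum, ← Finset.sum_add_distrib,
    ← Finset.sum_sub_distrib]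
  exact Finset.sum_congr rfl fun _ _ => Finset.sum_congr rfl fun _ _ => by ring

theorem frobSq_smul (t : ℝ) (M : Matrix (Fin a) (Fin b) ℝ) : frobSq (t • M) = t ^ 2 * frobSq M := by
  simp [frobSq, Finset.mul_sum, mul_pow]

theorem frobSq_transpose (M : Matrix (Fin a) (Fin b) ℝ) : frobSq Mᵀ = frobSq M :=
  Finset.sum_comm

theorem sq_le_frobSq (M : Matrix (Fin a) (Fin b) ℝ) (i : Fin a) (j : Fin b) :
    M i j ^ 2 ≤ frobSq M :=
  (Finset.single_le_sum (fun j _ => sq_nonneg (M i j)) (Finset.mem_univ j)).trans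
    (Finset.single_le_sum (f := fun i => ∑ j, M i j ^ 2)
      (fun i _ => Finset.sum_nonneg fun j _ => sq_nonneg (M i j)) (Finset.mem_univ i))

theorem isCompact_setOf_frobSq_le (C : ℝ) :
    IsCompact {M : Matrix (Fin a) (Fin b) ℝ | frobSq M ≤ C} := by
  refine (isCompact_univ_pi fun _ => isCompact_univ_pi fun _ =>
    isCompact_Icc (a := -√C) (b := √C)).of_isClosed_subset
    (isClosed_le (by unfold frobSq; fun_prop) continuous_const) fun M hM => ?_
  simp only [Set.mem_pi, Set.mem_univ, true_implies]
  exact fun i j => abs_le.1 (Real.abs_le_sqrt ((sq_le_frobSq M i j).trans hM))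

theorem tendsto_zero_of_frobSq {M : ℕ → Matrix (Fin a) (Fin b) ℝ}
    (h : Tendsto (fun k => frobSq (M k)) atTop (𝓝 0)) : Tendsto M atTop (𝓝 0) :=
  tendsto_pi_nhds.2 fun i => tendsto_pi_nhds.2 fun j =>
    squeeze_zero_norm (fun k => Real.abs_le_sqrt (sq_le_frobSq (M k) i j))
      (by simpa using h.sqrt)

end Frobenius

section Projections

variable {a b : ℕ} (Ω : Finset (Fin a × Fin b))

@[fun_prop]
theorem continuous_projPerp : Continuous (projPerp Ω) :=
  continuous_pi fun i => continuous_pi fun j => by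
    simp only [projPerp, Matrix.of_apply]; split_ifs <;> fun_prop

@[fun_prop]
theorem continuous_proj : Continuous (proj Ω) :=
  continuous_pi fun i => continuous_pi fun j => by
    simp only [proj, Matrix.of_apply]; split_ifs <;> fun_prop

@[simp]
theorem projPerp_zero : projPerp Ω 0 = 0 := by
  ext; simp [projPerp]

theorem proj_sub (Y Z : Matrix (Fin a) (Fin b) ℝ) : proj Ω (Y - Z) = proj Ω Y - proj Ω Z := by
  ext i j; simp only [proj, Matrix.of_apply, Matrix.sub_apply]; split_ifs <;> simp

theorem proj_add_projPerp_sub (X Y Z : Matrix (Fin a) (Fin b) ℝ) :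
    proj Ω (X - Z) + projPerp Ω (Y - Z) = proj Ω X + projPerp Ω Y - Z := by
  ext i j; simp only [proj, projPerp, Matrix.of_apply, Matrix.add_apply, Matrix.sub_apply]
  split_ifs <;> ring

theorem frobSq_proj_add_projPerp (M N : Matrix (Fin a) (Fin b) ℝ) :
    frobSq (proj Ω M + projPerp Ω N) = frobSq (proj Ω M) + frobSq (projPerp Ω N) := by
  simp only [frobSq, proj, projPerp, Matrix.of_apply, Matrix.add_apply, ← Finset.sum_add_distrib]
  exact Finset.sum_congr rfl fun _ _ => Finset.sum_congr rfl fun _ _ => by split_ifs <;> simp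

theorem frobInner_proj_self_nonneg (M : Matrix (Fin a) (Fin b) ℝ) :
    0 ≤ frobInner (proj Ω M) M :=
  Finset.sum_nonneg fun i _ => Finset.sum_nonneg fun j _ => by
    simp only [proj, Matrix.of_apply]; split_ifs <;> nlinarith

def transposeIdx : Finset (Fin b × Fin a) := Ω.map (Equiv.prodComm _ _).toEmbedding

theorem mem_transposeIdx {i : Fin a} {j : Fin b} : (j, i) ∈ transposeIdx Ω ↔ (i, j) ∈ Ω := by
  simp [transposeIdx, Finset.mem_map_equiv]

theorem proj_transpose (Y : Matrix (Fin a) (Fin b) ℝ) :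
    (proj Ω Y)ᵀ = proj (transposeIdx Ω) Yᵀ := by
  ext; simp [proj, mem_transposeIdx]

theorem projPerp_transpose (Y : Matrix (Fin a) (Fin b) ℝ) :
    (projPerp Ω Y)ᵀ = projPerp (transposeIdx Ω) Yᵀ := by
  ext; simp [projPerp, mem_transposeIdx]

end Projections

section Ridge

variable {a b c : ℕ} {lam : ℝ} {Y : Matrix (Fin a) (Fin b) ℝ} {B : Matrix (Fin b) (Fin c) ℝ}
  {Z : Matrix (Fin a) (Fin c) ℝ}

def ridge (lam : ℝ) (Y : Matrix (Fin a) (Fin b) ℝ) (B : Matrix (Fin b) (Fin c) ℝ)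
    (Z : Matrix (Fin a) (Fin c) ℝ) : ℝ :=
  (1 / 2) * frobSq (Y - Z * Bᵀ) + (lam / 2) * frobSq Z

theorem ridge_add (lam : ℝ) (Y : Matrix (Fin a) (Fin b) ℝ) (B : Matrix (Fin b) (Fin c) ℝ)
    (Z D : Matrix (Fin a) (Fin c) ℝ) :
    ridge lam Y B (Z + D) = ridge lam Y B Z - frobInner ((Y - Z * Bᵀ) * B - lam • Z) D +
      (1 / 2) * frobSq (D * Bᵀ) + (lam / 2) * frobSq D := by
  have hres : Y - (Z + D) * Bᵀ = (Y - Z * Bᵀ) - D * Bᵀ := by rw [Matrix.add_mul]; abel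
  rw [ridge, ridge, hres, frobSq_sub, frobSq_add, frobInner_mul_transpose, frobInner_sub_left,
    frobInner_smul_left]
  ring

/-- The first-order condition is extracted from the quadratic `t ↦ ridge (Z + t • G)` with
`G` the negative gradient: it is minimal at `t = 0`, so its linear coefficient `-‖G‖²` vanishes. -/
theorem ridge_normal_eq (hmin : ∀ W, ridge lam Y B Z ≤ ridge lam Y B W) :
    (Y - Z * Bᵀ) * B = lam • Z := by
  set G := (Y - Z * Bᵀ) * B - lam • Z
  have hquad : ∀ t : ℝ, 0 ≤ ((1 / 2) * frobSq (G * Bᵀ) + (lam / 2) * frobSq G) * (t * t) +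
      (-frobInner G G) * t + 0 := fun t => by
    have h := hmin (Z + t • G)
    rw [ridge_add, frobInner_smul_right, Matrix.smul_mul, frobSq_smul, frobSq_smul] at h
    linarith
  have hG : frobInner G G = 0 := by
    have hdisc := discrim_le_zero hquad
    rw [discrim] at hdisc
    nlinarith [sq_nonneg (frobInner G G)]
  rw [frobInner_self] at hG
  exact sub_eq_zero.1 (frobSq_eq_zero_iff.1 hG)

theorem ridge_add_le_of_normal_eq (hnormal : (Y - Z * Bᵀ) * B = lam • Z)
    (W : Matrix (Fin a) (Fin c) ℝ) :
    ridge lam Y B Z + (lam / 2) * frobSq (W - Z) ≤ ridge lam Y B W := by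
  have h := ridge_add lam Y B Z (W - Z)
  rw [add_sub_cancel, hnormal, sub_self, frobInner_zero_left] at h
  linarith [frobSq_nonneg ((W - Z) * Bᵀ)]

end Ridge

section Objective

variable {m n r : ℕ} {Ω : Finset (Fin m × Fin n)} {X : Matrix (Fin m) (Fin n) ℝ} {lam : ℝ}

def gradA (Ω : Finset (Fin m × Fin n)) (X : Matrix (Fin m) (Fin n) ℝ) (lam : ℝ)
    (A : Matrix (Fin m) (Fin r) ℝ) (B : Matrix (Fin n) (Fin r) ℝ) : Matrix (Fin m) (Fin r) ℝ :=
  proj Ω (A * Bᵀ - X) * B + lam • A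

def gradB (Ω : Finset (Fin m × Fin n)) (X : Matrix (Fin m) (Fin n) ℝ) (lam : ℝ)
    (A : Matrix (Fin m) (Fin r) ℝ) (B : Matrix (Fin n) (Fin r) ℝ) : Matrix (Fin n) (Fin r) ℝ :=
  (proj Ω (A * Bᵀ - X))ᵀ * A + lam • B

@[fun_prop]
theorem continuous_gradA :
    Continuous fun p : Matrix (Fin m) (Fin r) ℝ × Matrix (Fin n) (Fin r) ℝ =>
      gradA Ω X lam p.1 p.2 := by
  unfold gradA; fun_prop

@[fun_prop]
theorem continuous_gradB :
    Continuous fun p : Matrix (Fin m) (Fin r) ℝ × Matrix (Fin n) (Fin r) ℝ =>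
      gradB Ω X lam p.1 p.2 := by
  unfold gradB; fun_prop

theorem mul_frobSq_le_Fobj (A : Matrix (Fin m) (Fin r) ℝ) (B : Matrix (Fin n) (Fin r) ℝ) :
    (lam / 2) * (frobSq A + frobSq B) ≤ Fobj Ω X lam A B :=
  le_add_of_nonneg_left (mul_nonneg (by norm_num) (frobSq_nonneg _))

/-- `F(·,B)` is `λ`-strongly convex, so its gradient is injective. -/
theorem gradA_injective (hlam : 0 < lam) (B : Matrix (Fin n) (Fin r) ℝ) :
    Function.Injective (gradA Ω X lam · B) := by
  intro A₁ A₂ h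
  have hdiff : gradA Ω X lam A₁ B - gradA Ω X lam A₂ B =
      proj Ω ((A₁ - A₂) * Bᵀ) * B + lam • (A₁ - A₂) := by
    simp only [gradA, Matrix.sub_mul, proj_sub, smul_sub]; abel
  have hzero : frobInner (proj Ω ((A₁ - A₂) * Bᵀ)) ((A₁ - A₂) * Bᵀ) +
      lam * frobSq (A₁ - A₂) = 0 := by
    rw [frobInner_mul_transpose, ← frobInner_self, ← frobInner_smul_left, ← frobInner_add_left,
      ← hdiff, show gradA Ω X lam A₁ B = gradA Ω X lam A₂ B from h, sub_self, frobInner_zero_left]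
  have hsq : frobSq (A₁ - A₂) = 0 := by
    nlinarith [frobInner_proj_self_nonneg Ω ((A₁ - A₂) * Bᵀ), frobSq_nonneg (A₁ - A₂)]
  exact sub_eq_zero.1 (frobSq_eq_zero_iff.1 hsq)

theorem QA_eq_ridge (Z A : Matrix (Fin m) (Fin r) ℝ) (B : Matrix (Fin n) (Fin r) ℝ) :
    QA Ω X lam Z A B = ridge lam (proj Ω X + projPerp Ω (A * Bᵀ)) B Z + (lam / 2) * frobSq B := by
  rw [QA, ridge, proj_add_projPerp_sub]

theorem QA_eq_Fobj_add (Z A : Matrix (Fin m) (Fin r) ℝ) (B : Matrix (Fin n) (Fin r) ℝ) :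
    QA Ω X lam Z A B = Fobj Ω X lam Z B + (1 / 2) * frobSq (projPerp Ω (A * Bᵀ - Z * Bᵀ)) := by
  rw [QA, Fobj, frobSq_proj_add_projPerp]; ring

theorem QA_self (A : Matrix (Fin m) (Fin r) ℝ) (B : Matrix (Fin n) (Fin r) ℝ) :
    QA Ω X lam A A B = Fobj Ω X lam A B := by
  rw [QA_eq_Fobj_add, sub_self, projPerp_zero, frobSq_zero, mul_zero, add_zero]

variable {A A' : Matrix (Fin m) (Fin r) ℝ} {B B' : Matrix (Fin n) (Fin r) ℝ}

theorem ridge_le_of_isMin_QA (hmin : ∀ Z, QA Ω X lam A' A B ≤ QA Ω X lam Z A B)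
    (W : Matrix (Fin m) (Fin r) ℝ) :
    ridge lam (proj Ω X + projPerp Ω (A * Bᵀ)) B A' ≤
      ridge lam (proj Ω X + projPerp Ω (A * Bᵀ)) B W := by
  have h := hmin W
  rw [QA_eq_ridge, QA_eq_ridge] at h
  linarith

theorem Fobj_add_le_of_isMin_QA (hmin : ∀ Z, QA Ω X lam A' A B ≤ QA Ω X lam Z A B) :
    Fobj Ω X lam A' B + (lam / 2) * frobSq (A - A') ≤ Fobj Ω X lam A B := by
  have hdecr := ridge_add_le_of_normal_eq (ridge_normal_eq (ridge_le_of_isMin_QA hmin)) A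
  calc Fobj Ω X lam A' B + (lam / 2) * frobSq (A - A')
      ≤ QA Ω X lam A' A B + (lam / 2) * frobSq (A - A') := by
        rw [QA_eq_Fobj_add]; linarith [frobSq_nonneg (projPerp Ω (A * Bᵀ - A' * Bᵀ))]
    _ ≤ QA Ω X lam A A B := by rw [QA_eq_ridge, QA_eq_ridge]; linarith
    _ = Fobj Ω X lam A B := QA_self A B

theorem gradA_eq_of_isMin_QA (hmin : ∀ Z, QA Ω X lam A' A B ≤ QA Ω X lam Z A B) :
    gradA Ω X lam A' B = projPerp Ω (A * Bᵀ - A' * Bᵀ) * B := by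
  have h := ridge_normal_eq (ridge_le_of_isMin_QA hmin)
  rw [← proj_add_projPerp_sub, proj_sub, Matrix.add_mul] at h
  rw [gradA, proj_sub, ← h, Matrix.sub_mul, Matrix.sub_mul]
  abel

theorem QB_eq_QA_transpose (Z B : Matrix (Fin n) (Fin r) ℝ) (A : Matrix (Fin m) (Fin r) ℝ) :
    QB Ω X lam Z A B = QA (transposeIdx Ω) Xᵀ lam Z B A := by
  rw [QB, QA, ← frobSq_transpose, Matrix.transpose_add, proj_transpose, projPerp_transpose]
  simp only [Matrix.transpose_sub, Matrix.transpose_mul, Matrix.transpose_transpose]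
  ring

theorem Fobj_eq_Fobj_transpose (A : Matrix (Fin m) (Fin r) ℝ) (B : Matrix (Fin n) (Fin r) ℝ) :
    Fobj Ω X lam A B = Fobj (transposeIdx Ω) Xᵀ lam B A := by
  rw [Fobj, Fobj, ← frobSq_transpose, proj_transpose]
  simp only [Matrix.transpose_sub, Matrix.transpose_mul, Matrix.transpose_transpose]
  ring

theorem gradB_eq_gradA_transpose (A : Matrix (Fin m) (Fin r) ℝ) (B : Matrix (Fin n) (Fin r) ℝ) :
    gradB Ω X lam A B = gradA (transposeIdx Ω) Xᵀ lam B A := by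
  rw [gradB, gradA, proj_transpose]
  simp only [Matrix.transpose_sub, Matrix.transpose_mul, Matrix.transpose_transpose]

theorem gradB_injective (hlam : 0 < lam) (A : Matrix (Fin m) (Fin r) ℝ) :
    Function.Injective (gradB Ω X lam A ·) := by
  simpa only [gradB_eq_gradA_transpose] using gradA_injective hlam A

theorem Fobj_add_le_of_isMin_QB (hmin : ∀ Z, QB Ω X lam B' A B ≤ QB Ω X lam Z A B) :
    Fobj Ω X lam A B' + (lam / 2) * frobSq (B - B') ≤ Fobj Ω X lam A B := by
  simp only [QB_eq_QA_transpose] at hmin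
  simpa only [← Fobj_eq_Fobj_transpose] using Fobj_add_le_of_isMin_QA hmin

theorem gradB_eq_of_isMin_QB (hmin : ∀ Z, QB Ω X lam B' A B ≤ QB Ω X lam Z A B) :
    gradB Ω X lam A B' = projPerp (transposeIdx Ω) (B * Aᵀ - B' * Aᵀ) * A := by
  simp only [QB_eq_QA_transpose] at hmin
  rw [gradB_eq_gradA_transpose, gradA_eq_of_isMin_QA hmin]

end Objective

end SoftImpute

namespace SoftImputeALS

open SoftImpute Topology

variable {m n r : ℕ} {Ω : Finset (Fin m × Fin n)} {X : Matrix (Fin m) (Fin n) ℝ} {lam : ℝ}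
  {A : ℕ → Matrix (Fin m) (Fin r) ℝ} {B : ℕ → Matrix (Fin n) (Fin r) ℝ}

theorem Fobj_succ_add_le (hALS : SoftImputeALS Ω X lam A B) (k : ℕ) :
    Fobj Ω X lam (A (k + 1)) (B (k + 1)) +
        (lam / 2) * (frobSq (A k - A (k + 1)) + frobSq (B k - B (k + 1))) ≤
      Fobj Ω X lam (A k) (B k) := by
  linarith [Fobj_add_le_of_isMin_QA (hALS k).1, Fobj_add_le_of_isMin_QB (hALS k).2]

theorem Fobj_le_Fobj_zero (hALS : SoftImputeALS Ω X lam A B) (hlam : 0 < lam) (k : ℕ) :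
    Fobj Ω X lam (A k) (B k) ≤ Fobj Ω X lam (A 0) (B 0) := by
  refine antitone_nat_of_succ_le (f := fun k => Fobj Ω X lam (A k) (B k)) (fun k => ?_)
    (Nat.zero_le k)
  nlinarith [hALS.Fobj_succ_add_le k, frobSq_nonneg (A k - A (k + 1)),
    frobSq_nonneg (B k - B (k + 1))]

theorem frobSq_le (hALS : SoftImputeALS Ω X lam A B) (hlam : 0 < lam) (k : ℕ) :
    frobSq (A k) ≤ 2 / lam * Fobj Ω X lam (A 0) (B 0) ∧
      frobSq (B k) ≤ 2 / lam * Fobj Ω X lam (A 0) (B 0) := by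
  have h := (mul_frobSq_le_Fobj (A k) (B k)).trans (hALS.Fobj_le_Fobj_zero hlam k)
  rw [div_mul_eq_mul_div, le_div_iff₀ hlam, le_div_iff₀ hlam]
  constructor <;> nlinarith [frobSq_nonneg (A k), frobSq_nonneg (B k)]

theorem tendsto_sub_succ (hALS : SoftImputeALS Ω X lam A B) (hlam : 0 < lam) :
    Tendsto (fun k => A k - A (k + 1)) atTop (𝓝 0) ∧
      Tendsto (fun k => B k - B (k + 1)) atTop (𝓝 0) := by
  have hsteps := tendsto_zero_of_add_mul_le (half_pos hlam)
    (fun k => (mul_nonneg (half_pos hlam).le (add_nonneg (frobSq_nonneg (A k))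
      (frobSq_nonneg (B k)))).trans (mul_frobSq_le_Fobj (A k) (B k)))
    (fun k => add_nonneg (frobSq_nonneg _) (frobSq_nonneg _)) hALS.Fobj_succ_add_le
  exact ⟨tendsto_zero_of_frobSq (squeeze_zero (fun _ => frobSq_nonneg _)
      (fun k => le_add_of_nonneg_right (frobSq_nonneg _)) hsteps),
    tendsto_zero_of_frobSq (squeeze_zero (fun _ => frobSq_nonneg _)
      (fun k => le_add_of_nonneg_left (frobSq_nonneg _)) hsteps)⟩

theorem gradA_succ (hALS : SoftImputeALS Ω X lam A B) (k : ℕ) :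
    gradA Ω X lam (A (k + 1)) (B k) =
      projPerp Ω (A k * (B k)ᵀ - A (k + 1) * (B k)ᵀ) * B k :=
  gradA_eq_of_isMin_QA (hALS k).1

theorem gradB_succ (hALS : SoftImputeALS Ω X lam A B) (k : ℕ) :
    gradB Ω X lam (A (k + 1)) (B (k + 1)) =
      projPerp (transposeIdx Ω) (B k * (A (k + 1))ᵀ - B (k + 1) * (A (k + 1))ᵀ) * A (k + 1) :=
  gradB_eq_of_isMin_QB (hALS k).2

theorem grad_eq_zero_of_tendsto (hALS : SoftImputeALS Ω X lam A B) (hlam : 0 < lam)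
    {τ : ℕ → ℕ} (hτ : Tendsto τ atTop atTop) {L : Matrix (Fin m) (Fin r) ℝ}
    {M : Matrix (Fin n) (Fin r) ℝ} (hA : Tendsto (A ∘ τ) atTop (𝓝 L))
    (hB : Tendsto (B ∘ τ) atTop (𝓝 M)) :
    gradA Ω X lam L M = 0 ∧ gradB Ω X lam L M = 0 := by
  obtain ⟨hstepA, hstepB⟩ := hALS.tendsto_sub_succ hlam
  have hA' : Tendsto (fun k => A (τ k + 1)) atTop (𝓝 L) := by
    simpa using hA.sub (hstepA.comp hτ)
  have hB' : Tendsto (fun k => B (τ k + 1)) atTop (𝓝 M) := by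
    simpa using hB.sub (hstepB.comp hτ)
  constructor
  · refine tendsto_nhds_unique ((continuous_gradA.tendsto (L, M)).comp (hA'.prodMk_nhds hB)) ?_
    have hres := ((by fun_prop : Continuous fun p : Matrix (Fin m) (Fin r) ℝ ×
        Matrix (Fin m) (Fin r) ℝ × Matrix (Fin n) (Fin r) ℝ =>
          projPerp Ω (p.1 * p.2.2ᵀ - p.2.1 * p.2.2ᵀ) * p.2.2).tendsto (L, L, M)).comp
      (hA.prodMk_nhds (hA'.prodMk_nhds hB))
    simpa [Function.comp_def, hALS.gradA_succ] using hres
  · refine tendsto_nhds_unique ((continuous_gradB.tendsto (L, M)).comp (hA'.prodMk_nhds hB')) ?_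
    have hres := ((by fun_prop : Continuous fun p : Matrix (Fin n) (Fin r) ℝ ×
        Matrix (Fin n) (Fin r) ℝ × Matrix (Fin m) (Fin r) ℝ =>
          projPerp (transposeIdx Ω) (p.1 * p.2.2ᵀ - p.2.1 * p.2.2ᵀ) * p.2.2).tendsto
          (M, M, L)).comp (hB.prodMk_nhds (hB'.prodMk_nhds hA'))
    simpa [Function.comp_def, hALS.gradB_succ] using hres

end SoftImputeALS

open SoftImpute

theorem softImputeALS_limit_points {m n r : ℕ} (Ω : Finset (Fin m × Fin n))
    (X : Matrix (Fin m) (Fin n) ℝ) (lam : ℝ) (hlam : 0 < lam)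
    (A : ℕ → Matrix (Fin m) (Fin r) ℝ) (B : ℕ → Matrix (Fin n) (Fin r) ℝ)
    (hALS : SoftImputeALS Ω X lam A B) :
    -- (a) every limit point of (A_k, B_k) is a first-order stationary point of F
    (∀ (Astar : Matrix (Fin m) (Fin r) ℝ) (Bstar : Matrix (Fin n) (Fin r) ℝ)
        (φ : ℕ → ℕ), StrictMono φ →
        Tendsto (fun k => (A (φ k), B (φ k))) atTop (nhds (Astar, Bstar)) →
        proj Ω (Astar * Bstarᵀ - X) * Bstar + lam • Astar = 0 ∧
        (proj Ω (Astar * Bstarᵀ - X))ᵀ * Astar + lam • Bstar = 0) ∧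
    -- (b) if B_k → B* along a subsequence, then A_k converges along it
    (∀ (Bstar : Matrix (Fin n) (Fin r) ℝ) (φ : ℕ → ℕ), StrictMono φ →
        Tendsto (fun k => B (φ k)) atTop (nhds Bstar) →
        ∃ Astar : Matrix (Fin m) (Fin r) ℝ,
          Tendsto (fun k => A (φ k)) atTop (nhds Astar)) ∧
    -- symmetrically, if A_k → A* along a subsequence, then B_k converges along it
    (∀ (Astar : Matrix (Fin m) (Fin r) ℝ) (φ : ℕ → ℕ), StrictMono φ →
        Tendsto (fun k => A (φ k)) atTop (nhds Astar) →
        ∃ Bstar : Matrix (Fin n) (Fin r) ℝ,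
          Tendsto (fun k => B (φ k)) atTop (nhds Bstar)) := by
  refine ⟨fun L M φ hφ h => hALS.grad_eq_zero_of_tendsto hlam hφ.tendsto_atTop h.fst_nhds
    h.snd_nhds, fun M φ hφ hB => ?_, fun L φ hφ hA => ?_⟩
  · refine exists_tendsto_of_forall_subseq_mem (isCompact_setOf_frobSq_le _)
      (fun k => (hALS.frobSq_le hlam (φ k)).1)
      ((Set.subsingleton_singleton (a := 0)).preimage (gradA_injective (Ω := Ω) (X := X) hlam M))
      fun ψ L hψ hL => ?_
    exact (hALS.grad_eq_zero_of_tendsto hlam (hφ.tendsto_atTop.comp hψ.tendsto_atTop) hL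
      (hB.comp hψ.tendsto_atTop)).1
  · refine exists_tendsto_of_forall_subseq_mem (isCompact_setOf_frobSq_le _)
      (fun k => (hALS.frobSq_le hlam (φ k)).2)
      ((Set.subsingleton_singleton (a := 0)).preimage (gradB_injective (Ω := Ω) (X := X) hlam L))
      fun ψ M hψ hM => ?_
    exact (hALS.grad_eq_zero_of_tendsto hlam (hφ.tendsto_atTop.comp hψ.tendsto_atTop)
      (hA.comp hψ.tendsto_atTop) hM).2
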